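/- Let φ : [0,∞) → (0,1] be a continuous, strictly decreasing bijection from [0,∞) onto (0,1] with φ(0) = 1, differentiable at 0 with derivative φ'(0) = −1, and inverse φ⁻¹. Let G and H be distribution functions on ℝ with G(y) > 0 for all y, let a_n > 0 and b_n ∈ ℝ be sequences of constants, and let x ∈ ℝ be a point with H(x) > 0. Then G(a_n·x + b_n)^n → H(x) as n → ∞ if and only if φ(n·φ⁻¹(G(a_n·x + b_n))) → φ(−log H(x)) as n → ∞. -/

import Mathlib

open Filter Topology Set

/-- A distribution function on `ℝ`: monotone nondecreasing, right-continuous,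
tending to `0` at `−∞` and to `1` at `+∞`. -/
def IsDF (H : ℝ → ℝ) : Prop :=
  Monotone H ∧ (∀ x, ContinuousWithinAt H (Ici x) x) ∧
    Tendsto H atBot (𝓝 0) ∧ Tendsto H atTop (𝓝 1)

/-! Write `uₙ = G(aₙx + bₙ) = φ(sₙ)` with `sₙ = ψ(uₙ) ≥ 0`. Taking logarithms, the left-hand side
says `n·log φ(sₙ) → log H(x)`; applying the continuous strictly decreasing `φ`, the right-hand side
says `n·sₙ → −log H(x)`. Both force `sₙ → 0`, and since `log ∘ φ` has derivative `−1` at `0`,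
`n·log φ(sₙ)` is then asymptotically equivalent to `−n·sₙ`. -/

open Asymptotics

theorem HasDerivWithinAt.isEquivalent_sub {𝕜 F : Type*} [NontriviallyNormedField 𝕜]
    [NormedAddCommGroup F] [NormedSpace 𝕜 F] {f : 𝕜 → F} {f' : F} {s : Set 𝕜} {x : 𝕜}
    (hf : HasDerivWithinAt f f' s x) (hf' : f' ≠ 0) :
    (fun y => f y - f x) ~[𝓝[s] x] (fun y => (y - x) • f') :=
  (HasDerivAtFilter.isEquivalent_sub hf hf').comp_tendsto
    (tendsto_id.prodMk tendsto_const_pure)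

theorem tendsto_zero_of_tendsto_nat_mul {v : ℕ → ℝ} {L : ℝ}
    (h : Tendsto (fun n : ℕ => (n : ℝ) * v n) atTop (𝓝 L)) :
    Tendsto v atTop (𝓝 0) := by
  refine (h.div_atTop tendsto_natCast_atTop_atTop).congr' ?_
  filter_upwards [eventually_ne_atTop 0] with n hn
  field_simp

section StrictAntiOn

variable {ι : Type*} {l : Filter ι} {f : ℝ → ℝ} {a t : ℝ} {v : ι → ℝ}

theorem StrictAntiOn.tendsto_of_tendsto_comp (hf : StrictAntiOn f (Ici a)) (ht : a ≤ t)
    (hv : ∀ᶠ i in l, a ≤ v i) (h : Tendsto (fun i => f (v i)) l (𝓝 (f t))) :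
    Tendsto v l (𝓝 t) := by
  refine tendsto_order.2 ⟨fun c hc => ?_, fun c hc => ?_⟩
  · rcases lt_or_ge c a with hca | hac
    · filter_upwards [hv] with i hi using hca.trans_le hi
    · filter_upwards [hv, h.eventually (eventually_lt_nhds (hf hac ht hc))] with i hi hfi
      exact (hf.lt_iff_gt hi hac).1 hfi
  · have hac : a ≤ c := ht.trans hc.le
    filter_upwards [hv, h.eventually (eventually_gt_nhds (hf ht hac hc))] with i hi hfi
    exact (hf.lt_iff_gt hac hi).1 hfi

theorem StrictAntiOn.tendsto_comp_iff (hf : StrictAntiOn f (Ici a))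
    (hc : ContinuousOn f (Ici a)) (ht : a ≤ t) (hv : ∀ᶠ i in l, a ≤ v i) :
    Tendsto (fun i => f (v i)) l (𝓝 (f t)) ↔ Tendsto v l (𝓝 t) :=
  ⟨hf.tendsto_of_tendsto_comp ht hv, fun h =>
    (hc t ht).tendsto.comp (tendsto_nhdsWithin_iff.2 ⟨h, hv⟩)⟩

end StrictAntiOn

/-- Strict antitonicity is what forces `vₙ → 0` when `n * g (vₙ)` converges. -/
theorem tendsto_nat_mul_comp_iff {g : ℝ → ℝ} {d : ℝ} (hg : StrictAntiOn g (Ici 0))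
    (hg0 : g 0 = 0) (hd : HasDerivWithinAt g d (Ici 0) 0) (hd0 : d ≠ 0)
    {v : ℕ → ℝ} (hv : ∀ n, 0 ≤ v n) {L : ℝ} :
    Tendsto (fun n : ℕ => (n : ℝ) * g (v n)) atTop (𝓝 L) ↔
      Tendsto (fun n : ℕ => (n : ℝ) * v n) atTop (𝓝 (L / d)) := by
  have hequiv (hv0 : Tendsto v atTop (𝓝 0)) :
      (fun n : ℕ => (n : ℝ) * g (v n)) ~[atTop] (fun n : ℕ => (n : ℝ) * v n * d) := by
    have hgd := (hd.isEquivalent_sub hd0).comp_tendsto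
      (tendsto_nhdsWithin_iff.2 ⟨hv0, Eventually.of_forall hv⟩)
    simp only [hg0, sub_zero, smul_eq_mul] at hgd
    simpa only [Pi.mul_def, Function.comp_def, mul_assoc] using
      (IsEquivalent.refl (u := fun n : ℕ => (n : ℝ))).mul hgd
  constructor
  · intro h
    have hv0 : Tendsto v atTop (𝓝 0) := by
      refine hg.tendsto_of_tendsto_comp le_rfl (Eventually.of_forall hv) ?_
      simpa [hg0] using tendsto_zero_of_tendsto_nat_mul h
    simpa [hd0] using ((hequiv hv0).tendsto_nhds_iff.1 h).div_const d
  · intro h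
    refine (hequiv (tendsto_zero_of_tendsto_nat_mul h)).tendsto_nhds_iff.2 ?_
    simpa [hd0] using h.mul_const d

theorem tendsto_pow_iff_tendsto_nat_mul_log {u : ℕ → ℝ} (hu : ∀ n, 0 < u n) {c : ℝ}
    (hc : 0 < c) :
    Tendsto (fun n => u n ^ n) atTop (𝓝 c) ↔
      Tendsto (fun n : ℕ => (n : ℝ) * Real.log (u n)) atTop (𝓝 (Real.log c)) := by
  have hpow (n : ℕ) : u n ^ n = Real.exp (n * Real.log (u n)) := by
    rw [Real.exp_nat_mul, Real.exp_log (hu n)]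
  simp only [hpow]
  constructor
  · intro h
    simpa [Function.comp_def] using ((Real.continuousAt_log hc.ne').tendsto).comp h
  · intro h
    simpa [Function.comp_def, Real.exp_log hc] using (Real.continuous_exp.tendsto _).comp h

theorem mem_domain_nMaxAttraction_iff_general
    (φ : ℝ → ℝ)
    (hcont : ContinuousOn φ (Ici 0))
    (hanti : StrictAntiOn φ (Ici 0))
    (hbij : BijOn φ (Ici 0) (Ioc 0 1))
    (h0 : φ 0 = 1)
    (hderiv : HasDerivWithinAt φ (-1) (Ici 0) 0)
    (ψ : ℝ → ℝ)
    (hψφ : ∀ s ∈ Ici (0 : ℝ), ψ (φ s) = s)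
    (hφψ : ∀ u ∈ Ioc (0 : ℝ) 1, φ (ψ u) = u)
    (G : ℝ → ℝ) (hG : IsDF G) (hGpos : ∀ y, 0 < G y)
    (H : ℝ → ℝ) (hH : IsDF H)
    (a : ℕ → ℝ) (b : ℕ → ℝ)
    (x : ℝ) (hx : 0 < H x) :
    Tendsto (fun n : ℕ => G (a n * x + b n) ^ n) atTop (𝓝 (H x)) ↔
      Tendsto (fun n : ℕ => φ ((n : ℝ) * ψ (G (a n * x + b n)))) atTop
        (𝓝 (φ (-Real.log (H x)))) := by
  set u : ℕ → ℝ := fun n => G (a n * x + b n)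
  have hu (n : ℕ) : u n ∈ Ioc 0 1 := ⟨hGpos _, hG.1.ge_of_tendsto hG.2.2.2 _⟩
  have hψu (n : ℕ) : 0 ≤ ψ (u n) := by
    obtain ⟨s, hs, hsu⟩ := hbij.surjOn (hu n)
    rwa [← hsu, hψφ s hs]
  have hlogφ : HasDerivWithinAt (fun s => Real.log (φ s)) (-1) (Ici 0) 0 := by
    simpa [h0, Function.comp_def] using (Real.hasDerivAt_log (by simp [h0])).comp_hasDerivWithinAt 0 hderiv
  have hlogφ_anti : StrictAntiOn (fun s => Real.log (φ s)) (Ici 0) := fun s hs r hr hsr =>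
    Real.log_lt_log (hbij.mapsTo hr).1 (hanti hs hr hsr)
  have ht : 0 ≤ -Real.log (H x) :=
    neg_nonneg.2 (Real.log_nonpos hx.le (hH.1.ge_of_tendsto hH.2.2.2 _))
  have key := tendsto_nat_mul_comp_iff hlogφ_anti (by simp [h0]) hlogφ (by norm_num) hψu
    (L := Real.log (H x))
  rw [div_neg, div_one] at key
  rw [hanti.tendsto_comp_iff hcont ht
      (Eventually.of_forall fun n => mul_nonneg n.cast_nonneg (hψu n)),
    tendsto_pow_iff_tendsto_nat_mul_log (fun n => (hu n).1) hx, ← key]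
  simp only [hφψ _ (hu _)]

/-- Pointwise one-dimensional Theorem 3.4: `G(aₙx + bₙ)ⁿ → H(x)` if and only if
`φ(n·φ⁻¹(G(aₙx + bₙ))) → φ(−log H(x))`, where `φ` is the standard solution to the
Poincaré equation and `ψ = φ⁻¹`. -/
theorem mem_domain_nMaxAttraction_iff
    (φ : ℝ → ℝ)
    (hcont : ContinuousOn φ (Ici 0))
    (hanti : StrictAntiOn φ (Ici 0))
    (hbij : BijOn φ (Ici 0) (Ioc 0 1))
    (h0 : φ 0 = 1)
    (hderiv : HasDerivWithinAt φ (-1) (Ici 0) 0)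
    (ψ : ℝ → ℝ)
    (hψφ : ∀ s ∈ Ici (0 : ℝ), ψ (φ s) = s)
    (hφψ : ∀ u ∈ Ioc (0 : ℝ) 1, φ (ψ u) = u)
    (G : ℝ → ℝ) (hG : IsDF G) (hGpos : ∀ y, 0 < G y)
    (H : ℝ → ℝ) (hH : IsDF H)
    (a : ℕ → ℝ) (ha : ∀ n, 0 < a n) (b : ℕ → ℝ)
    (x : ℝ) (hx : 0 < H x) :
    Tendsto (fun n : ℕ => G (a n * x + b n) ^ n) atTop (𝓝 (H x)) ↔
      Tendsto (fun n : ℕ => φ ((n : ℝ) * ψ (G (a n * x + b n)))) atTop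
        (𝓝 (φ (-Real.log (H x)))) :=
  mem_domain_nMaxAttraction_iff_general φ hcont hanti hbij h0 hderiv ψ hψφ hφψ G hG hGpos H hH a b x
    hx
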